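/- Let R be a subdirect product of SBM algebras A_1, …, A_n, let i ≠ j and α ≺ β ≤ θ_{A_i} in Con(A_i), γ ≺ δ ≤ θ_{A_j} in Con(A_j). If (α,β) can be separated from (γ,δ) in R, then there is a unary polynomial p of R that separates (α,β) from (γ,δ) (i.e., p_i(β) ⊄ α and p_j(δ) ⊆ γ) and moreover satisfies p_l(A_l) ⊆ max(A_l) for every l ∈ [n]. -/
import Mathlib


namespace SBMPaper

variable {A : Type*}

/-- A Mal'tsev operation: `m a b b = m b b a = a`. -/
def IsMaltsevOp (m : A → A → A → A) : Prop :=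
  ∀ a b : A, m a b b = a ∧ m b b a = a

/-- Containment of binary relations. -/
def RelLE (α β : A → A → Prop) : Prop := ∀ a b : A, α a b → β a b

/-- `p(β) ⊆ α` : the unary map `p` maps the relation `β` into `α`. -/
def PolMaps (p : A → A) (β α : A → A → Prop) : Prop :=
  ∀ a b : A, β a b → α (p a) (p b)

/-- `α ≺ β`: a prime (covering) interval with respect to the class `Cong` of congruences. -/
def PrimeCov (Cong : (A → A → Prop) → Prop) (α β : A → A → Prop) : Prop :=
  RelLE α β ∧ α ≠ β ∧
    ∀ γ : A → A → Prop, Cong γ → RelLE α γ → RelLE γ β → γ = α ∨ γ = β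

/-- An `(α,β)`-minimal set with respect to the class `Pol` of unary polynomials:
an image `p(A)` of a unary polynomial with `p(β) ⊄ α`, minimal under inclusion
among all such images. -/
def IsMinSetP (Pol : (A → A) → Prop) (α β : A → A → Prop) (U : Set A) : Prop :=
  (∃ p, Pol p ∧ Set.range p = U ∧ ¬ PolMaps p β α) ∧
  ∀ U' : Set A, (∃ p, Pol p ∧ Set.range p = U' ∧ ¬ PolMaps p β α) → U' ⊆ U → U' = U

/-- Unary polynomials of a Mal'tsev algebra `(A; m)`. -/
inductive MPol (m : A → A → A → A) : (A → A) → Prop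
  | id : MPol m fun x => x
  | const (a : A) : MPol m fun _ => a
  | mc {p q r : A → A} : MPol m p → MPol m q → MPol m r →
      MPol m fun x => m (p x) (q x) (r x)

/-- Congruences of a Mal'tsev algebra `(A; m)`. -/
def IsMCong (m : A → A → A → A) (α : A → A → Prop) : Prop :=
  Equivalence α ∧
  ∀ a a' b b' c c' : A, α a a' → α b b' → α c c' → α (m a b c) (m a' b' c')

/-- A congruence of an algebra with a binary operation `dot` and a ternary operation `m`. -/
def IsCong (dot : A → A → A) (m : A → A → A → A) (α : A → A → Prop) : Prop :=
  Equivalence α ∧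
  (∀ a a' b b' : A, α a a' → α b b' → α (dot a b) (dot a' b')) ∧
  (∀ a a' b b' c c' : A, α a a' → α b b' → α c c' → α (m a b c) (m a' b' c'))

/-- A semilattice block Mal'tsev (SBM) algebra `(A; dot, m)` with witnessing congruence `σ`:
`σ` is a congruence, the operation induced by `dot` on `A/σ` is a semilattice operation,
`dot` is the first projection on `σ`-blocks, `m` is Mal'tsev on `σ`-blocks,
`m(a,b,c) ≡_σ (a·b)·c`, and `x·(x·y) = x·y`. -/
def IsSBM (dot : A → A → A) (m : A → A → A → A) (σ : A → A → Prop) : Prop :=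
  IsCong dot m σ ∧
  (∀ a b : A, σ (dot a b) (dot b a)) ∧
  (∀ a b c : A, σ (dot (dot a b) c) (dot a (dot b c))) ∧
  (∀ a b : A, σ a b → dot a b = a) ∧
  (∀ a b : A, σ a b → m a b b = a ∧ m b b a = a) ∧
  (∀ a b c : A, σ (m a b c) (dot (dot a b) c)) ∧
  (∀ x y : A, dot x (dot x y) = dot x y)

/-- `a` belongs to the greatest `σ`-block `max(A)` of the semilattice `A/σ`. -/
def InMax (dot : A → A → A) (σ : A → A → Prop) (a : A) : Prop :=
  ∀ b : A, σ (dot b a) a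

/-- The equivalence relation `θ_A` whose blocks are `max(A)` and the singletons outside it. -/
def ThetaA (dot : A → A → A) (σ : A → A → Prop) (a b : A) : Prop :=
  a = b ∨ (InMax dot σ a ∧ InMax dot σ b)

/-- Unary polynomials of an SBM algebra `(A; dot, m)`. -/
inductive UPol (dot : A → A → A) (m : A → A → A → A) : (A → A) → Prop
  | id : UPol dot m fun x => x
  | const (a : A) : UPol dot m fun _ => a
  | dotc {p q : A → A} : UPol dot m p → UPol dot m q →
      UPol dot m fun x => dot (p x) (q x)
  | mc {p q r : A → A} : UPol dot m p → UPol dot m q → UPol dot m r →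
      UPol dot m fun x => m (p x) (q x) (r x)

/-- `A` has a minimal (neutral) element. -/
def HasMinElt (dot : A → A → A) : Prop :=
  ∃ a : A, ∀ b : A, dot a b = b ∧ dot b a = b

/-- `a` is an `αβ`-split element. -/
def IsSplit (dot : A → A → A) (α β : A → A → Prop) (a : A) : Prop :=
  ∃ b c : A, β b c ∧ ¬ α (dot a b) (dot a c)

/-- Unary polynomials of a binary relation `S ⊆ A × B`: pairs of maps generated from
the identity and the constant pairs taken from `S`, closed under coordinatewise
`dot` and `m`. -/
inductive BPol {B : Type*} (dA : A → A → A) (mA : A → A → A → A)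
    (dB : B → B → B) (mB : B → B → B → B) (S : A → B → Prop) :
    (A → A) → (B → B) → Prop
  | id : BPol dA mA dB mB S (fun x => x) (fun y => y)
  | const (a : A) (b : B) (h : S a b) : BPol dA mA dB mB S (fun _ => a) (fun _ => b)
  | dotc {p₁ q₁ : A → A} {p₂ q₂ : B → B} : BPol dA mA dB mB S p₁ p₂ →
      BPol dA mA dB mB S q₁ q₂ →
      BPol dA mA dB mB S (fun x => dA (p₁ x) (q₁ x)) (fun y => dB (p₂ y) (q₂ y))
  | mc {p₁ q₁ r₁ : A → A} {p₂ q₂ r₂ : B → B} : BPol dA mA dB mB S p₁ p₂ →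
      BPol dA mA dB mB S q₁ q₂ → BPol dA mA dB mB S r₁ r₂ →
      BPol dA mA dB mB S (fun x => mA (p₁ x) (q₁ x) (r₁ x))
        (fun y => mB (p₂ y) (q₂ y) (r₂ y))

section Subdirect

variable {n : ℕ} {F : Fin n → Type*}

/-- `R` is a subdirect product of the algebras `F 1, …, F n`. -/
def SubdirectProd (dot : ∀ i, F i → F i → F i) (m : ∀ i, F i → F i → F i → F i)
    (R : Set (∀ i, F i)) : Prop :=
  R.Nonempty ∧
  (∀ x ∈ R, ∀ y ∈ R, (fun i => dot i (x i) (y i)) ∈ R) ∧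
  (∀ x ∈ R, ∀ y ∈ R, ∀ z ∈ R, (fun i => m i (x i) (y i) (z i)) ∈ R) ∧
  (∀ (i : Fin n) (a : F i), ∃ x ∈ R, x i = a)

/-- Unary polynomials of a relation `R`: families of maps generated from the identity
family and constant families taken from `R`, closed under coordinatewise `dot` and `m`. -/
inductive RPol (dot : ∀ i, F i → F i → F i) (m : ∀ i, F i → F i → F i → F i)
    (R : Set (∀ i, F i)) : (∀ i, F i → F i) → Prop
  | id : RPol dot m R fun _ x => x
  | const (a : ∀ i, F i) (ha : a ∈ R) : RPol dot m R fun i _ => a i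
  | dotc {p q : ∀ i, F i → F i} : RPol dot m R p → RPol dot m R q →
      RPol dot m R fun i x => dot i (p i x) (q i x)
  | mc {p q r : ∀ i, F i → F i} : RPol dot m R p → RPol dot m R q → RPol dot m R r →
      RPol dot m R fun i x => m i (p i x) (q i x) (r i x)

/-- The interval `(α,β)` at coordinate `i` can be separated from `(γ,δ)` at
coordinate `j` in `R`. -/
def SepIn (dot : ∀ i, F i → F i → F i) (m : ∀ i, F i → F i → F i → F i)
    (R : Set (∀ i, F i)) (i : Fin n) (α β : F i → F i → Prop)
    (j : Fin n) (γ δ : F j → F j → Prop) : Prop :=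
  ∃ p, RPol dot m R p ∧ ¬ PolMaps (p i) β α ∧ PolMaps (p j) δ γ

/-- `(i, α, β) ∈ I_R` : `α ≺ β ≤ θ_{A_i}` is a prime interval of congruences of `F i`. -/
def InIR (dot : ∀ i, F i → F i → F i) (m : ∀ i, F i → F i → F i → F i)
    (σ : ∀ i, F i → F i → Prop) (i : Fin n) (α β : F i → F i → Prop) : Prop :=
  IsCong (dot i) (m i) α ∧ IsCong (dot i) (m i) β ∧
  PrimeCov (IsCong (dot i) (m i)) α β ∧ RelLE β (ThetaA (dot i) (σ i))

end Subdirect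

section CSP

variable {V : Type*} {D : V → Type*}

/-- A constraint: a scope `W ⊆ V` together with a relation on `∏_{v ∈ W} D v`. -/
abbrev Constr (V : Type*) (D : V → Type*) := Σ W : Set V, Set (∀ v : W, D v.1)

/-- Solutions of the restricted instance `P_W` (recorded as full assignments;
only the values on `W` are constrained). -/
def SolOn (C : Set (Constr V D)) (W : Set V) : Set (∀ v, D v) :=
  {φ | ∀ c ∈ C, ∃ x ∈ c.2, ∀ u : c.1, u.1 ∈ W → x u = φ u.1}

/-- The binary relation `S_{vw}` of partial solutions on `{v, w}`. -/
def SvwRel (C : Set (Constr V D)) (v w : V) (a : D v) (b : D w) : Prop :=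
  ∃ φ ∈ SolOn C {v, w}, φ v = a ∧ φ w = b

/-- The instance is tightened : `A_v = S_v` for every variable `v`. -/
def Tight (C : Set (Constr V D)) : Prop :=
  ∀ (v : V) (a : D v), ∃ φ ∈ SolOn C {v}, φ v = a

/-- The restricted instance `P_W` is minimal: every tuple of every constraint of `P_W`
extends to a solution of `P_W`. -/
def MinOn (C : Set (Constr V D)) (W : Set V) : Prop :=
  ∀ c ∈ C, ∀ x ∈ c.2, ∃ φ ∈ SolOn C W, ∀ u : c.1, u.1 ∈ W → φ u.1 = x u

/-- `k`-minimality: `P_W` is minimal for every `k`-element `W ⊆ V`. -/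
def KMin (C : Set (Constr V D)) (k : ℕ) : Prop :=
  ∀ W : Set V, W.ncard = k → MinOn C W

/-- `(v, α, β) ∈ I_P` : `α ≺ β ≤ θ_{A_v}` is a prime interval of congruences of `D v`. -/
def InIP (dot : ∀ v, D v → D v → D v) (m : ∀ v, D v → D v → D v → D v)
    (σ : ∀ v, D v → D v → Prop) (v : V) (α β : D v → D v → Prop) : Prop :=
  IsCong (dot v) (m v) α ∧ IsCong (dot v) (m v) β ∧
  PrimeCov (IsCong (dot v) (m v)) α β ∧ RelLE β (ThetaA (dot v) (σ v))

/-- `(α,β)` (at `v`) can be separated from `(γ,δ)` (at `w`) in `S_{vw}`. -/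
def SepPair (dot : ∀ v, D v → D v → D v) (m : ∀ v, D v → D v → D v → D v)
    (C : Set (Constr V D)) (v : V) (α β : D v → D v → Prop)
    (w : V) (γ δ : D w → D w → Prop) : Prop :=
  ∃ p q, BPol (dot v) (m v) (dot w) (m w) (SvwRel C v w) p q ∧
    ¬ PolMaps p β α ∧ PolMaps q δ γ

/-- The coherent set `W_{vαβ}`. -/
def WCoh (dot : ∀ v, D v → D v → D v) (m : ∀ v, D v → D v → D v → D v)
    (σ : ∀ v, D v → D v → Prop) (C : Set (Constr V D))
    (v : V) (α β : D v → D v → Prop) : Set V :=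
  {w | ∃ γ δ : D w → D w → Prop, InIP dot m σ w γ δ ∧
    ¬ SepPair dot m C v α β w γ δ}

/-- Block-minimality: `P_{W_{vαβ}}` is minimal for every `(v,α,β) ∈ I_P`. -/
def BlockMin (dot : ∀ v, D v → D v → D v) (m : ∀ v, D v → D v → D v → D v)
    (σ : ∀ v, D v → D v → Prop) (C : Set (Constr V D)) : Prop :=
  ∀ (v : V) (α β : D v → D v → Prop), InIP dot m σ v α β →
    MinOn C (WCoh dot m σ C v α β)

/-- A `ḡ`-ensemble for the instance `C`. -/
def IsEnsemble (dot : ∀ v, D v → D v → D v) (m : ∀ v, D v → D v → D v → D v)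
    (σ : ∀ v, D v → D v → Prop) (C : Set (Constr V D))
    (g : ∀ u, D u → D u → Prop)
    (Φ : ∀ (v : V) (α β : D v → D v → Prop), InIP dot m σ v α β → ∀ u, D u) : Prop :=
  (∀ (v : V) (α β : D v → D v → Prop) (h : InIP dot m σ v α β),
    Φ v α β h ∈ SolOn C (WCoh dot m σ C v α β)) ∧
  (∀ (v : V) (α β : D v → D v → Prop) (h : InIP dot m σ v α β)
      (w : V) (γ δ : D w → D w → Prop) (h' : InIP dot m σ w γ δ)
      (u : V), u ∈ WCoh dot m σ C v α β → u ∈ WCoh dot m σ C w γ δ →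
    g u (Φ v α β h u) (Φ w γ δ h' u)) ∧
  (∀ c ∈ C, ∃ x ∈ c.2, ∀ (u : c.1) (v : V) (α β : D v → D v → Prop)
      (h : InIP dot m σ v α β), u.1 ∈ WCoh dot m σ C v α β →
    g u.1 (x u) (Φ v α β h u.1))

end CSP

end SBMPaper

namespace SBMPaper

section AuxSingle

variable {A : Type*} {dot : A → A → A} {m : A → A → A → A} {σ : A → A → Prop}

lemma inMax_sigma (h : IsSBM dot m σ) {a a' : A} (hσ : σ a a') (ha : InMax dot σ a) :
    InMax dot σ a' := by
  obtain ⟨⟨heq, hdc, _⟩, _⟩ := h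
  intro b
  exact heq.trans (heq.trans (hdc b b a' a (heq.refl _) (heq.symm hσ)) (ha b)) hσ

lemma inMax_dot_left (h : IsSBM dot m σ) {c : A} (hc : InMax dot σ c) (d : A) :
    InMax dot σ (dot c d) := by
  obtain ⟨⟨heq, hdc, _⟩, hcomm, hassoc, _⟩ := h
  intro b
  exact heq.trans (heq.symm (hassoc b c d)) (hdc _ _ d d (hc b) (heq.refl _))

lemma inMax_dot_right (h : IsSBM dot m σ) {d : A} (hd : InMax dot σ d) (c : A) :
    InMax dot σ (dot c d) :=
  inMax_sigma h (h.2.1 d c) (inMax_dot_left h hd c)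

lemma foldr_absorb (h : IsSBM dot m σ) :
    ∀ (L : List A) (c b : A), b ∈ L → σ (dot b (L.foldr dot c)) (L.foldr dot c) := by
  obtain ⟨⟨heq, hdc, _⟩, hcomm, hassoc, _, _, _, habs⟩ := h
  intro L
  induction L with
  | nil => intro c b hb; simp at hb
  | cons x L' ih =>
    intro c b hb
    simp only [List.foldr_cons]
    rcases List.mem_cons.mp hb with rfl | hb'
    · rw [habs]; exact heq.refl _
    · exact heq.trans (heq.symm (hassoc b x (L'.foldr dot c)))
        (heq.trans (hdc _ _ _ _ (hcomm b x) (heq.refl _))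
          (heq.trans (hassoc x b (L'.foldr dot c))
            (hdc x x _ _ (heq.refl _) (ih c b hb'))))

lemma exists_inMax [Fintype A] [Nonempty A] (h : IsSBM dot m σ) :
    ∃ t : A, InMax dot σ t := by
  classical
  refine ⟨(Finset.univ : Finset A).toList.foldr dot (Classical.arbitrary A), fun b => ?_⟩
  exact foldr_absorb h _ _ b (Finset.mem_toList.mpr (Finset.mem_univ b))

end AuxSingle

section AuxSub

variable {n : ℕ} {F : Fin n → Type*}
variable {dot : ∀ i, F i → F i → F i} {m : ∀ i, F i → F i → F i → F i}
variable {σ : ∀ i, F i → F i → Prop} {R : Set (∀ i, F i)}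

lemma rpol_cong {p : ∀ i, F i → F i} (hp : RPol dot m R p) (i : Fin n)
    {κ : F i → F i → Prop} (hκ : IsCong (dot i) (m i) κ) :
    ∀ a b : F i, κ a b → κ (p i a) (p i b) := by
  induction hp with
  | id => intro a b hab; exact hab
  | const c hc => intro a b _; exact hκ.1.refl _
  | dotc hq hr ihq ihr =>
    intro a b hab
    exact hκ.2.1 _ _ _ _ (ihq a b hab) (ihr a b hab)
  | mc hq hr hs ihq ihr ihs =>
    intro a b hab
    exact hκ.2.2 _ _ _ _ _ _ (ihq a b hab) (ihr a b hab) (ihs a b hab)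

/-- The basic "push into max" polynomial determined by a constant `r`. -/
def gmap (dot : ∀ i, F i → F i → F i) (m : ∀ i, F i → F i → F i → F i)
    (r : ∀ i, F i) (i : Fin n) (x : F i) : F i :=
  m i x (dot i (r i) x) (dot i (r i) x)

/-- Iterated composition of the `gmap`s for a list of coordinates. -/
def Gmap (dot : ∀ i, F i → F i → F i) (m : ∀ i, F i → F i → F i → F i)
    (r : Fin n → ∀ i, F i) : List (Fin n) → ∀ i, F i → F i
  | [] => fun _ x => x
  | l :: L => fun i x => gmap dot m (r l) i (Gmap dot m r L i x)

lemma gmap_fix (hsbm : ∀ i, IsSBM (dot i) (m i) (σ i)) (r : ∀ i, F i) (i : Fin n)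
    {x : F i} (hx : InMax (dot i) (σ i) x) : gmap dot m r i x = x := by
  have hσ : σ i x (dot i (r i) x) := (hsbm i).1.1.symm (hx (r i))
  exact ((hsbm i).2.2.2.2.1 x (dot i (r i) x) hσ).1

lemma gmap_max (hsbm : ∀ i, IsSBM (dot i) (m i) (σ i)) (r : ∀ i, F i) (i : Fin n)
    (hr : InMax (dot i) (σ i) (r i)) (x : F i) :
    InMax (dot i) (σ i) (gmap dot m r i x) := by
  have hv : InMax (dot i) (σ i) (dot i (r i) x) := inMax_dot_left (hsbm i) hr x
  have hw : InMax (dot i) (σ i) (dot i (dot i x (dot i (r i) x)) (dot i (r i) x)) :=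
    inMax_dot_right (hsbm i) hv _
  exact inMax_sigma (hsbm i) ((hsbm i).1.1.symm ((hsbm i).2.2.2.2.2.1 x _ _)) hw

lemma gmap_cong (r : ∀ i, F i) (i : Fin n) {κ : F i → F i → Prop}
    (hκ : IsCong (dot i) (m i) κ) {x y : F i} (hxy : κ x y) :
    κ (gmap dot m r i x) (gmap dot m r i y) := by
  have h2 : κ (dot i (r i) x) (dot i (r i) y) := hκ.2.1 _ _ _ _ (hκ.1.refl _) hxy
  exact hκ.2.2 _ _ _ _ _ _ hxy h2 h2

lemma Gmap_fix (hsbm : ∀ i, IsSBM (dot i) (m i) (σ i)) (r : Fin n → ∀ i, F i)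
    (L : List (Fin n)) (i : Fin n) {x : F i} (hx : InMax (dot i) (σ i) x) :
    Gmap dot m r L i x = x := by
  induction L with
  | nil => rfl
  | cons l L' ih =>
    show gmap dot m (r l) i (Gmap dot m r L' i x) = x
    rw [ih, gmap_fix hsbm _ _ hx]

lemma Gmap_max (hsbm : ∀ i, IsSBM (dot i) (m i) (σ i)) (r : Fin n → ∀ i, F i)
    (hr : ∀ l, InMax (dot l) (σ l) (r l l)) (L : List (Fin n)) (l : Fin n)
    (hl : l ∈ L) (x : F l) : InMax (dot l) (σ l) (Gmap dot m r L l x) := by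
  induction L with
  | nil => simp at hl
  | cons h L' ih =>
    rcases List.mem_cons.mp hl with rfl | hl'
    · exact gmap_max hsbm (r l) l (hr l) _
    · have hy := ih hl'
      show InMax (dot l) (σ l) (gmap dot m (r h) l (Gmap dot m r L' l x))
      rw [gmap_fix hsbm _ _ hy]
      exact hy

lemma Gmap_cong (r : Fin n → ∀ i, F i) (L : List (Fin n)) (i : Fin n)
    {κ : F i → F i → Prop} (hκ : IsCong (dot i) (m i) κ) {x y : F i} (hxy : κ x y) :
    κ (Gmap dot m r L i x) (Gmap dot m r L i y) := by
  induction L with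
  | nil => exact hxy
  | cons l L' ih => exact gmap_cong (r l) i hκ ih

lemma Gmap_rpol (r : Fin n → ∀ i, F i) (hr : ∀ l, r l ∈ R) (L : List (Fin n))
    {p : ∀ i, F i → F i} (hp : RPol dot m R p) :
    RPol dot m R (fun i x => Gmap dot m r L i (p i x)) := by
  induction L with
  | nil => exact hp
  | cons l L' ih =>
    exact RPol.mc ih (RPol.dotc (RPol.const (r l) (hr l)) ih)
      (RPol.dotc (RPol.const (r l) (hr l)) ih)

end AuxSub

/-- If `(α,β)` at coordinate `i` can be separated from `(γ,δ)` at coordinate `j` in a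
subdirect product `R` of SBM algebras, then there is a separating unary polynomial `p`
of `R` with `p_l(A_l) ⊆ max(A_l)` for every coordinate `l`. -/
theorem separating_polynomial_into_max {n : ℕ} {F : Fin n → Type*}
    [∀ i, Fintype (F i)] [∀ i, Nonempty (F i)]
    (dot : ∀ i, F i → F i → F i) (m : ∀ i, F i → F i → F i → F i)
    (σ : ∀ i, F i → F i → Prop)
    (hsbm : ∀ i, IsSBM (dot i) (m i) (σ i))
    (R : Set (∀ i, F i)) (hR : SubdirectProd dot m R)
    (i j : Fin n) (hij : i ≠ j)
    (α β : F i → F i → Prop) (hi : InIR dot m σ i α β)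
    (γ δ : F j → F j → Prop) (hj : InIR dot m σ j γ δ)
    (hsep : SepIn dot m R i α β j γ δ) :
    ∃ p, RPol dot m R p ∧ ¬ PolMaps (p i) β α ∧ PolMaps (p j) δ γ ∧
      ∀ (l : Fin n) (x : F l), InMax (dot l) (σ l) (p l x) := by
  classical
  obtain ⟨p, hp, hpi, hpj⟩ := hsep
  obtain ⟨hRne, hRdot, hRm, hRsub⟩ := hR
  choose t ht using fun l => exists_inMax (hsbm l)
  choose r hrR hrl using fun l => hRsub l (t l)
  have hrmax : ∀ l, InMax (dot l) (σ l) (r l l) := fun l => (hrl l).symm ▸ ht l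
  set L : List (Fin n) := List.finRange n with hL
  refine ⟨fun i x => Gmap dot m r L i (p i x), Gmap_rpol r hrR L hp, ?_, ?_, ?_⟩
  · -- separation at coordinate i
    simp only [PolMaps, not_forall] at hpi
    obtain ⟨a, b, hab, hnab⟩ := hpi
    have hβ : β (p i a) (p i b) := rpol_cong hp i hi.2.1 a b hab
    have hθ := hi.2.2.2 _ _ hβ
    rcases hθ with heq | ⟨hma, hmb⟩
    · exact absurd (heq ▸ hi.1.1.refl (p i a)) hnab
    · intro hP
      exact hnab (by simpa [Gmap_fix hsbm r L i hma, Gmap_fix hsbm r L i hmb] using hP a b hab)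
  · intro a b hab
    exact Gmap_cong r L j hj.1 (hpj a b hab)
  · intro l x
    exact Gmap_max hsbm r hrmax L l (List.mem_finRange l) (p l x)

end SBMPaper
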